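/- Fix integers a > 0, b ≥ 0 and write b = ra + b' with 0 ≤ b' < a. Let Z, Z' be multisets of nonnegative integers of the same cardinality and same sum, with Z ⊴ Z', satisfying: all entries lie in (aℤ) ∪ (b' + aℤ), and if b' = 0 no entry is repeated more than twice, while if b' > 0 all entries are distinct. Let t be large enough that the conjugates Z̄ and Z̄' are defined as the complements of {ta+b'−z : z ∈ Z} (resp. for Z') in the multiset {0, a, 2a, …, ta, b', a+b', …, ta+b'}. Then Z̄' ⊴ Z̄. -/

import Mathlib

/-- Decreasing enumeration of a multiset of natural numbers. -/
def dsort (M : Multiset ℕ) : List ℕ := (M.sort (· ≤ ·)).reverse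

/-- Dominance order on multisets of naturals (same size, same sum). -/
def MDom (M M' : Multiset ℕ) : Prop :=
  ∀ d, ((dsort M).take d).sum ≤ ((dsort M').take d).sum

/-- The ambient multiset {0, a, 2a, …, ta, b', a+b', …, ta+b'}. -/
def ambient (a b' t : ℕ) : Multiset ℕ :=
  ((Finset.range (t + 1)).val.map (· * a)) +
  ((Finset.range (t + 1)).val.map fun i => i * a + b')

/-! The partial-sum order `MDom` is weak majorization, which is equivalent to the pointwise order
of the excess functions `x ↦ ∑ (z - x)⁺`. Reflecting `z ↦ N - z` turns the excess at `x` into the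
deficit `∑ (N - x - z)⁺`, which for multisets of equal size and sum differs from the excess at
`N - x` by a common constant; so reflection preserves dominance. Removing a submultiset from a
fixed multiset subtracts its excess from that of the ambient one, which reverses dominance. -/

def excess (x : ℕ) (M : Multiset ℕ) : ℕ := (M.map (· - x)).sum

lemma excess_add (x : ℕ) (M M' : Multiset ℕ) : excess x (M + M') = excess x M + excess x M' := by
  simp [excess]

lemma dsort_coe (M : Multiset ℕ) : (dsort M : Multiset ℕ) = M := by
  simp [dsort]

lemma pairwise_dsort (M : Multiset ℕ) : (dsort M).Pairwise (· ≥ ·) := by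
  simp [dsort, List.pairwise_reverse]

lemma excess_eq_sum_dsort (x : ℕ) (M : Multiset ℕ) :
    excess x M = ((dsort M).map (· - x)).sum := by
  conv_lhs => rw [← dsort_coe M]
  simp [excess]

lemma sum_take_le_sum_map_tsub_add (l : List ℕ) (x d : ℕ) :
    (l.take d).sum ≤ (l.map (· - x)).sum + d * x := by
  induction l generalizing d with
  | nil => simp
  | cons a l ih =>
    cases d with
    | zero => simp
    | succ d =>
      have := ih d
      simp only [List.take_succ_cons, List.sum_cons, List.map_cons, Nat.succ_mul]
      omega

lemma sum_map_tsub_eq_zero {l : List ℕ} {x : ℕ} (h : ∀ m ∈ l, m ≤ x) :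
    (l.map (· - x)).sum = 0 :=
  List.sum_eq_zero fun _ hy => by
    obtain ⟨m, hm, rfl⟩ := List.mem_map.1 hy
    exact Nat.sub_eq_zero_of_le (h m hm)

/-- The bound of `sum_take_le_sum_map_tsub_add` is attained at `d` = the number of entries
above `x`. -/
lemma exists_sum_take_eq_sum_map_tsub_add {l : List ℕ} (hl : l.Pairwise (· ≥ ·)) (x : ℕ) :
    ∃ d, (l.take d).sum = (l.map (· - x)).sum + d * x := by
  induction l with
  | nil => exact ⟨0, by simp⟩
  | cons a l ih =>
    rw [List.pairwise_cons] at hl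
    obtain ⟨d, hd⟩ := ih hl.2
    by_cases hax : a ≤ x
    · refine ⟨0, ?_⟩
      rw [sum_map_tsub_eq_zero fun m hm => ?_]
      · simp
      · rcases List.mem_cons.1 hm with rfl | hm
        exacts [hax, (hl.1 m hm).trans hax]
    · refine ⟨d + 1, ?_⟩
      simp only [List.take_succ_cons, List.sum_cons, List.map_cons, Nat.succ_mul]
      omega

/-- The bound of `sum_take_le_sum_map_tsub_add` is attained at `x` = the `d`-th largest entry
(the largest one if `d = 0`). -/
lemma exists_le_headI_sum_take_eq_sum_map_tsub_add {l : List ℕ} (hl : l.Pairwise (· ≥ ·))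
    (d : ℕ) : ∃ x ≤ l.headI, (l.take d).sum = (l.map (· - x)).sum + d * x := by
  induction l generalizing d with
  | nil => exact ⟨0, le_rfl, by simp⟩
  | cons a l ih =>
    rw [List.pairwise_cons] at hl
    cases d with
    | zero =>
      refine ⟨a, le_rfl, ?_⟩
      rw [sum_map_tsub_eq_zero fun m hm => ?_]
      · simp
      · rcases List.mem_cons.1 hm with rfl | hm
        exacts [le_rfl, hl.1 m hm]
    | succ d =>
      obtain ⟨x, hx, hd⟩ := ih hl.2 d
      have hxa : x ≤ a := by
        rcases l with _ | ⟨c, l⟩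
        · exact hx.trans (Nat.zero_le a)
        · exact hx.trans (hl.1 c List.mem_cons_self)
      refine ⟨x, hxa, ?_⟩
      simp only [List.take_succ_cons, List.sum_cons, List.map_cons, Nat.succ_mul]
      omega

theorem mdom_iff_forall_excess_le {M M' : Multiset ℕ} :
    MDom M M' ↔ ∀ x, excess x M ≤ excess x M' := by
  constructor
  · intro h x
    obtain ⟨d, hd⟩ := exists_sum_take_eq_sum_map_tsub_add (pairwise_dsort M) x
    have := sum_take_le_sum_map_tsub_add (dsort M') x d
    rw [excess_eq_sum_dsort, excess_eq_sum_dsort]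
    have := h d
    omega
  · intro h d
    obtain ⟨x, -, hd⟩ := exists_le_headI_sum_take_eq_sum_map_tsub_add (pairwise_dsort M') d
    have := sum_take_le_sum_map_tsub_add (dsort M) x d
    have := h x
    rw [excess_eq_sum_dsort, excess_eq_sum_dsort] at this
    omega

/-- Pointwise, `(N - z - x) + z = max (N - x) z = (z - (N - x)) + (N - x)` in `ℕ`. -/
lemma excess_map_tsub_add_sum (N x : ℕ) (Z : Multiset ℕ) :
    excess x (Z.map (N - ·)) + Z.sum = excess (N - x) Z + Multiset.card Z * (N - x) := by
  induction Z using Multiset.induction with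
  | empty => simp [excess]
  | cons z Z ih =>
    simp only [excess, Multiset.map_cons, Multiset.map_map, Function.comp_def,
      Multiset.sum_cons, Multiset.card_cons, Nat.succ_mul] at ih ⊢
    omega

theorem MDom.map_tsub {Z Z' : Multiset ℕ} (N : ℕ) (hcard : Multiset.card Z = Multiset.card Z')
    (hsum : Z.sum = Z'.sum) (h : MDom Z Z') : MDom (Z.map (N - ·)) (Z'.map (N - ·)) := by
  rw [mdom_iff_forall_excess_le] at h ⊢
  intro x
  have hZ := excess_map_tsub_add_sum N x Z
  have hZ' := excess_map_tsub_add_sum N x Z'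
  rw [hcard, hsum] at hZ
  have := h (N - x)
  omega

theorem MDom.tsub_of_le {A R R' : Multiset ℕ} (hR : R ≤ A) (hR' : R' ≤ A) (h : MDom R R') :
    MDom (A - R') (A - R) := by
  rw [mdom_iff_forall_excess_le] at h ⊢
  intro x
  have hA := excess_add x (A - R) R
  have hA' := excess_add x (A - R') R'
  rw [tsub_add_cancel_of_le hR] at hA
  rw [tsub_add_cancel_of_le hR'] at hA'
  have := h x
  omega

theorem conjugation_reverses_dominance_general (a b' t : ℕ)
    (Z Z' : Multiset ℕ)
    (hcard : Multiset.card Z = Multiset.card Z') (hsum : Z.sum = Z'.sum)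
    (htZ : Z.map (fun z => t * a + b' - z) ≤ ambient a b' t)
    (htZ' : Z'.map (fun z => t * a + b' - z) ≤ ambient a b' t)
    (hdom : MDom Z Z') :
    MDom (ambient a b' t - Z'.map (fun z => t * a + b' - z))
      (ambient a b' t - Z.map (fun z => t * a + b' - z)) :=
  (hdom.map_tsub (t * a + b') hcard hsum).tsub_of_le htZ htZ'

theorem conjugation_reverses_dominance (a b r b' t : ℕ)
    (ha : 0 < a) (hb : b = r * a + b') (hb'a : b' < a)
    (Z Z' : Multiset ℕ)
    (hcard : Multiset.card Z = Multiset.card Z') (hsum : Z.sum = Z'.sum)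
    (hmodZ : ∀ z ∈ Z, z % a = 0 ∨ z % a = b')
    (hmodZ' : ∀ z ∈ Z', z % a = 0 ∨ z % a = b')
    (hrep0 : b' = 0 → (∀ v, Z.count v ≤ 2) ∧ (∀ v, Z'.count v ≤ 2))
    (hrep1 : 0 < b' → Z.Nodup ∧ Z'.Nodup)
    (hzb : ∀ z ∈ Z, z ≤ t * a + b') (hzb' : ∀ z ∈ Z', z ≤ t * a + b')
    (htZ : Z.map (fun z => t * a + b' - z) ≤ ambient a b' t)
    (htZ' : Z'.map (fun z => t * a + b' - z) ≤ ambient a b' t)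
    (hdom : MDom Z Z') :
    MDom (ambient a b' t - Z'.map (fun z => t * a + b' - z))
      (ambient a b' t - Z.map (fun z => t * a + b' - z)) :=
  conjugation_reverses_dominance_general a b' t Z Z' hcard hsum htZ htZ' hdom
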